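/- arXiv:2509.23884 — 3 statements merged into one kernel-verified Lean document; each statement's English description precedes it below -/
import Mathlib

section
/- Let n, k, s, t be positive integers with k < n and s < n, and suppose k·s < n·t. Then no (n,k,s)-configuration is t-admissible; that is, for every function c : ZMod n → Bool with exactly k positions equal to true, there exists a set of s consecutive positions containing fewer than t positions equal to true. -/
open Finset

/- Averaging: as `i` runs over the circle, each position lies in exactly `s` of the windows
`i, i + 1, …, i + s - 1`, so the window counts of `A` sum to `k * s < n * t`, and some window
has fewer than `t` letters `A`. -/

theorem Finset.sum_card_filter_add_eq {G ι : Type*} [AddGroup G] [Fintype G] (p : G → Prop)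
    [DecidablePred p] (S : Finset ι) (f : ι → G) :
    ∑ i : G, #{j ∈ S | p (i + f j)} = #S * #{x | p x} := by
  have translate (j : ι) : ∑ i : G, (if p (i + f j) then 1 else 0) = #{x | p x} := by
    rw [card_filter]
    exact Fintype.sum_equiv (Equiv.addRight (f j)) _ _ fun _ => rfl
  simp_rw [card_filter]
  rw [sum_comm]
  simp [translate]

theorem no_admissible_configuration_of_lt_general (n k s t : ℕ) [NeZero n]
    (h : k * s < n * t)
    (c : ZMod n → Bool)
    (hc : (Finset.univ.filter (fun i => c i = true)).card = k) :
    ∃ i : ZMod n,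
      ((Finset.range s).filter (fun (j : ℕ) => c (i + (j : ZMod n)) = true)).card < t := by
  have hsum := sum_card_filter_add_eq (fun x => c x = true) (range s) (fun j => (j : ZMod n))
  rw [card_range, hc] at hsum
  obtain ⟨i, -, hi⟩ := exists_lt_of_sum_lt (s := univ) (g := fun _ => t) <| by
    rw [hsum, sum_const, card_univ, ZMod.card, smul_eq_mul]
    linarith
  exact ⟨i, hi⟩

/-- If `k * s < n * t`, then no `(n,k,s)`-configuration is `t`-admissible: for every
`c : ZMod n → Bool` with exactly `k` positions `true`, some window of `s` consecutive
positions contains fewer than `t` positions equal to `true`. -/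
theorem no_admissible_configuration_of_lt (n k s t : ℕ) [NeZero n]
    (hk : 0 < k) (hs : 0 < s) (ht : 0 < t) (hkn : k < n) (hsn : s < n)
    (h : k * s < n * t)
    (c : ZMod n → Bool)
    (hc : (Finset.univ.filter (fun i => c i = true)).card = k) :
    ∃ i : ZMod n,
      ((Finset.range s).filter (fun (j : ℕ) => c (i + (j : ZMod n)) = true)).card < t :=
  no_admissible_configuration_of_lt_general n k s t h c hc
end

section
/- Let n, k, m be positive integers with 2·k ≤ n and m ≤ n. Then there exists a coloring χ : ZMod n → ℤ taking only the values −1 and 1, with exactly k positions colored 1, such that for every i : ZMod n, |∑_{j=0}^{m−1} χ(i+j)| ≤ m − 2·⌊m·k/n⌋. -/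
/-!
Colour position `x` by `1` exactly when `⌊(x + 1) k / n⌋ > ⌊x k / n⌋` (the mechanical word of
slope `k / n`); this is `n`-periodic, so it lives on `ZMod n`, and it has `k` ones per period.
A window starting at `a` of length `m` then contains `⌊(a + m) k / n⌋ - ⌊a k / n⌋` ones, which
is `⌊m k / n⌋` or `⌈m k / n⌉`; the hypothesis `2 k ≤ n` gives `⌊m k / n⌋ + ⌈m k / n⌉ ≤ m`,
so in either case the discrepancy is at most `m - 2 ⌊m k / n⌋`.
-/

open Finset

namespace Nat

variable {n k : ℕ}

theorem two_mul_mul_div_le (h2k : 2 * k ≤ n) (m : ℕ) : 2 * (m * k / n) ≤ m := by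
  rcases n.eq_zero_or_pos with rfl | hn
  · simp
  refine Nat.le_of_mul_le_mul_right ?_ hn
  calc 2 * (m * k / n) * n ≤ 2 * (m * k) := by
        rw [mul_assoc]
        exact Nat.mul_le_mul_left 2 (Nat.div_mul_le_self _ _)
    _ = m * (2 * k) := by ring
    _ ≤ m * n := Nat.mul_le_mul_left m h2k

theorem two_mul_mul_div_lt (h2k : 2 * k ≤ n) {m : ℕ} (hdvd : ¬n ∣ m * k) :
    2 * (m * k / n) < m := by
  have hlt : m * k / n * n < m * k :=
    (Nat.div_mul_le_self _ _).lt_of_ne fun h => hdvd (Dvd.intro_left _ h)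
  refine Nat.lt_of_mul_lt_mul_right (a := n) ?_
  calc 2 * (m * k / n) * n < 2 * (m * k) := by rw [mul_assoc]; omega
    _ = m * (2 * k) := by ring
    _ ≤ m * n := Nat.mul_le_mul_left m h2k

theorem add_mul_div_add_mul_div_le (h2k : 2 * k ≤ n) (a m : ℕ) :
    (a + m) * k / n + m * k / n ≤ a * k / n + m := by
  rw [add_mul]
  by_cases hdvd : n ∣ m * k
  · have := two_mul_mul_div_le h2k m
    rw [Nat.add_div_of_dvd_left hdvd]
    omega
  · have := two_mul_mul_div_lt h2k hdvd
    have := Nat.add_div_le_div_add_div_add_one (a * k) (m * k) n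
    omega

end Nat

def mechanicalWord (n k x : ℕ) : ℤ := ((x + 1) * k / n : ℕ) - (x * k / n : ℕ)

def mechanicalColoring (n k : ℕ) (i : ZMod n) : ℤ := 2 * mechanicalWord n k i.val - 1

section

variable {n k : ℕ}

theorem mechanicalWord_eq_zero_or_one (hkn : k ≤ n) (x : ℕ) :
    mechanicalWord n k x = 0 ∨ mechanicalWord n k x = 1 := by
  have hmono : x * k / n ≤ (x + 1) * k / n := Nat.div_le_div_right (by nlinarith)
  have hstep : (x + 1) * k / n ≤ x * k / n + 1 :=
    calc (x + 1) * k / n ≤ (x * k + n) / n := Nat.div_le_div_right (by rw [add_one_mul]; omega)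
      _ ≤ x * k / n + 1 := by
        rcases n.eq_zero_or_pos with rfl | hn
        · simp
        · rw [Nat.add_div_right _ hn]
  unfold mechanicalWord
  omega

theorem mechanicalWord_mod (x : ℕ) : mechanicalWord n k (x % n) = mechanicalWord n k x := by
  rcases n.eq_zero_or_pos with rfl | hn
  · simp
  have hshift (y : ℕ) : (y + n * (x / n)) * k / n = y * k / n + x / n * k := by
    rw [add_mul, mul_assoc, Nat.add_mul_div_left _ _ hn]
  conv_rhs => rw [← Nat.mod_add_div x n]
  unfold mechanicalWord
  rw [add_right_comm, hshift, hshift]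
  push_cast
  ring

theorem sum_range_mechanicalWord (a m : ℕ) :
    ∑ j ∈ range m, mechanicalWord n k (a + j) = ((a + m) * k / n : ℕ) - (a * k / n : ℕ) :=
  sum_range_sub (fun j => (((a + j) * k / n : ℕ) : ℤ)) m

theorem mechanicalColoring_eq_neg_one_or_one (hkn : k ≤ n) (i : ZMod n) :
    mechanicalColoring n k i = -1 ∨ mechanicalColoring n k i = 1 := by
  unfold mechanicalColoring
  rcases mechanicalWord_eq_zero_or_one hkn i.val with h | h <;> simp [h]

theorem mechanicalColoring_natCast (x : ℕ) :
    mechanicalColoring n k x = 2 * mechanicalWord n k x - 1 := by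
  rw [mechanicalColoring, ZMod.val_natCast, mechanicalWord_mod]

theorem card_mechanicalColoring_eq_one [NeZero n] (hkn : k ≤ n) :
    #{i | mechanicalColoring n k i = 1} = k := by
  have hind (i : ZMod n) :
      (if mechanicalColoring n k i = 1 then 1 else 0 : ℤ) = mechanicalWord n k i.val := by
    unfold mechanicalColoring
    rcases mechanicalWord_eq_zero_or_one hkn i.val with h | h <;> simp [h]
  have hval : ∑ i : ZMod n, mechanicalWord n k i.val = ∑ x ∈ range n, mechanicalWord n k x :=
    sum_nbij' ZMod.val (fun x => (x : ZMod n)) (by simp [ZMod.val_lt]) (by simp)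
      (by simp) (fun x hx => ZMod.val_cast_of_lt (mem_range.1 hx)) (by simp)
  zify
  rw [card_filter, Nat.cast_sum]
  push_cast
  rw [sum_congr rfl fun i _ => hind i, hval]
  simpa [NeZero.pos n] using sum_range_mechanicalWord (n := n) (k := k) 0 n

theorem sum_range_mechanicalColoring [NeZero n] (i : ZMod n) (m : ℕ) :
    ∑ j ∈ range m, mechanicalColoring n k (i + j) =
      2 * (((i.val + m) * k / n : ℕ) - (i.val * k / n : ℕ)) - m := by
  have hcast (j : ℕ) : i + j = ((i.val + j : ℕ) : ZMod n) := by simp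
  simp only [hcast, mechanicalColoring_natCast]
  rw [sum_sub_distrib, ← mul_sum, sum_range_mechanicalWord]
  simp

end

theorem exists_coloring_discrepancy_bound_general (n k m : ℕ) [NeZero n]
    (h2k : 2 * k ≤ n) :
    ∃ χ : ZMod n → ℤ,
      (∀ i : ZMod n, χ i = -1 ∨ χ i = 1) ∧
      (Finset.univ.filter (fun i => χ i = 1)).card = k ∧
      ∀ i : ZMod n,
        |∑ j ∈ Finset.range m, χ (i + (j : ZMod n))|
          ≤ (m : ℤ) - 2 * ((m * k / n : ℕ) : ℤ) := by
  refine ⟨mechanicalColoring n k, mechanicalColoring_eq_neg_one_or_one (by omega),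
    card_mechanicalColoring_eq_one (by omega), fun i => ?_⟩
  have hlow : i.val * k / n + m * k / n ≤ (i.val + m) * k / n := by
    rw [add_mul]
    exact Nat.div_add_div_le_add_div
  have hupp := Nat.add_mul_div_add_mul_div_le h2k i.val m
  rw [sum_range_mechanicalColoring, abs_le]
  constructor <;> omega

/-- Discrepancy bound: for `2 k ≤ n` and `m ≤ n` there is a coloring
`χ : ZMod n → {-1, 1}` with exactly `k` positions colored `1` whose discrepancy on every
window of `m` consecutive positions is at most `m - 2 ⌊m k / n⌋`. -/
theorem exists_coloring_discrepancy_bound (n k m : ℕ) [NeZero n]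
    (hk : 0 < k) (hm : 0 < m) (h2k : 2 * k ≤ n) (hmn : m ≤ n) :
    ∃ χ : ZMod n → ℤ,
      (∀ i : ZMod n, χ i = -1 ∨ χ i = 1) ∧
      (Finset.univ.filter (fun i => χ i = 1)).card = k ∧
      ∀ i : ZMod n,
        |∑ j ∈ Finset.range m, χ (i + (j : ZMod n))|
          ≤ (m : ℤ) - 2 * ((m * k / n : ℕ) : ℤ) :=
  exists_coloring_discrepancy_bound_general n k m h2k
end

section
/- Let n > k ≥ 1 be coprime integers, let [μ₁, …, μ_t] be the continued fraction expansion of n/k, and let S_t be the Smith word built from the quotients [μ₁−1, μ₂, …, μ_t]. Then the infinite periodic word obtained by repeating S_t is balanced with slope k/n: for every natural number n₁ and every m ≥ 1, the number of ones among positions n₁, n₁+1, …, n₁+m−1 of the infinite word is at least ⌊m·k/n⌋ and at most ⌈m·k/n⌉. -/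
/-!
Call a word *mechanical* with parameters `(p, q, r)` when it has length `p` and its prefix of
length `j` contains `⌊(j q + r) / p⌋` ones for every `j ≤ p`. Consecutive Smith words
`(S_{i-1}, S_i)`, of lengths `p', p` and with `q', q` ones, satisfy `q p' - p q' = ±1`;
`S_i` is mechanical with intercept `q` or `q - 1` according to that sign, and `S_{i-1}` minus its
last letter is a prefix of `S_i`. Hence `S_{i+1} = S_i^μ S_{i-1}` agrees with `S_i^(μ+1)` except
in its last letter, and since `q/p` and `Q/P = (μq + q')/(μp + p')` are Farey neighbours, the
floors `⌊(j q + r)/p⌋` and `⌊(j Q + R)/P⌋` agree for `j < P`: so `S_{i+1}` is mechanical too.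
Following `P/Q` along the continued fraction shows that `S_t` is mechanical with parameters
`(n, k, r)`; the number of ones in a window of length `m` of the periodic word is then
`⌊x + m k/n⌋ - ⌊x⌋`, which lies between `⌊m k/n⌋` and `⌈m k/n⌉`.
-/

/-- Value of a (finite) continued fraction with the given list of quotients:
`cfVal [μ₁, …, μ_t] = μ₁ + 1/(μ₂ + 1/(⋯ + 1/μ_t))`. -/
def cfVal : List ℕ → ℚ
  | [] => 0
  | a :: l => (a : ℚ) + (cfVal l)⁻¹

/-- The Smith word built from the quotients `[μ₁ - 1, μ₂, …, μ_t]`, where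
`[μ₁, …, μ_t]` is the input list: `S₁ = 0^(μ₁-1) ++ [1]`, `S₂ = S₁^μ₂ ++ [0]`,
and `S_j = S_{j-1}^(μ_j) ++ S_{j-2}` for `j ≥ 3` (letters `1 = A`, `0 = B`). -/
def smithWord : List ℕ → List ℤ
  | [] => []
  | μ₁ :: rest =>
    (rest.foldl (fun (p : List ℤ × List ℤ) (μ : ℕ) =>
        (p.2, (List.replicate μ p.2).flatten ++ p.1))
      (([0] : List ℤ), List.replicate (μ₁ - 1) (0 : ℤ) ++ [1])).2

theorem Nat.div_le_div_of_mul_lt {a b p P : ℕ} (hP : 0 < P) (h : a * P < (b + 1) * p) :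
    a / p ≤ b / P := by
  rw [Nat.le_div_iff_mul_le hP, ← Nat.lt_succ_iff]
  refine Nat.lt_of_mul_lt_mul_right (a := p) ?_
  calc a / p * P * p = a / p * p * P := Nat.mul_right_comm _ _ _
    _ ≤ a * P := Nat.mul_le_mul_right _ (Nat.div_mul_le_self a p)
    _ < (b + 1) * p := h

theorem Nat.div_eq_div_of_mul_lt {a b p P : ℕ} (h₁ : a * P < (b + 1) * p)
    (h₂ : b * p < (a + 1) * P) : a / p = b / P := by
  have hp : 0 < p := Nat.pos_of_mul_pos_left (Nat.zero_lt_of_lt h₁)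
  have hP : 0 < P := Nat.pos_of_mul_pos_left (Nat.zero_lt_of_lt h₂)
  exact le_antisymm (Nat.div_le_div_of_mul_lt hP h₁) (Nat.div_le_div_of_mul_lt hp h₂)

theorem List.take_eq_take_of_dropLast_prefix {α : Type*} {l₁ l₂ : List α} (h : l₁.dropLast <+: l₂)
    {i : ℕ} (hi : i ≤ l₁.length - 1) : l₁.take i = l₂.take i := by
  rw [List.prefix_iff_eq_take] at h
  calc l₁.take i = l₁.dropLast.take i := by
        rw [List.dropLast_eq_take, List.take_take, min_eq_left hi]
    _ = l₂.take i := by rw [h, List.take_take, min_eq_left (by rwa [List.length_dropLast])]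

theorem Int.floor_add_le_floor_add_ceil {α : Type*} [CommRing α] [LinearOrder α]
    [IsStrictOrderedRing α] [FloorRing α] (a b : α) : ⌊a + b⌋ ≤ ⌊a⌋ + ⌈b⌉ := by
  rw [Int.floor_le_iff]
  push_cast
  linarith [Int.lt_floor_add_one a, Int.le_ceil b]

def IsMechanical (w : List ℤ) (p q r : ℕ) : Prop :=
  w.length = p ∧ ∀ j ≤ p, (w.take j).count 1 = (j * q + r) / p

namespace IsMechanical

variable {w : List ℤ} {p q r : ℕ}

theorem div_eq_zero (hw : IsMechanical w p q r) : r / p = 0 := by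
  simpa using (hw.2 0 (Nat.zero_le p)).symm

theorem count_eq (hw : IsMechanical w p q r) (hp : 0 < p) : w.count 1 = q := by
  have h := hw.2 p le_rfl
  rwa [List.take_of_length_le hw.1.le, Nat.mul_add_div hp, hw.div_eq_zero,
    Nat.add_zero] at h

theorem count_take_flatten_replicate (hw : IsMechanical w p q r) (hp : 0 < p) (N : ℕ) {j : ℕ}
    (hj : j ≤ N * p) : ((List.replicate N w).flatten.take j).count 1 = (j * q + r) / p := by
  induction N generalizing j with
  | zero =>
    obtain rfl : j = 0 := by simpa using hj
    simpa using hw.div_eq_zero.symm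
  | succ N ih =>
    rw [List.replicate_succ, List.flatten_cons, List.take_append, List.count_append, hw.1]
    rcases le_or_gt j p with hjp | hpj
    · rw [Nat.sub_eq_zero_of_le hjp, List.take_zero, List.count_nil, Nat.add_zero, hw.2 j hjp]
    · obtain ⟨i, rfl⟩ := Nat.exists_eq_add_of_le hpj.le
      rw [List.take_of_length_le (hw.1.trans_le (Nat.le_add_right p i)), hw.count_eq hp,
        Nat.add_sub_cancel_left, ih (by rw [Nat.succ_mul] at hj; omega),
        show (p + i) * q + r = i * q + r + p * q by ring, Nat.add_mul_div_left _ _ hp, Nat.add_comm]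

theorem div_succ_eq (hw : IsMechanical w p q r) {i : ℕ} (hi : i < p) :
    ((i + 1) * q + r) / p = (i * q + r) / p + if w.getD i 0 = 1 then 1 else 0 := by
  have hi' : i < w.length := hw.1 ▸ hi
  rw [← hw.2 (i + 1) hi, ← hw.2 i hi.le, List.take_add_one, List.count_append,
    List.getElem?_eq_getElem hi', List.getD_eq_getElem _ _ hi']
  by_cases h : w[i] = 1 <;> simp [h]

theorem card_filter_range (hw : IsMechanical w p q r) (hp : 0 < p) (j : ℕ) :
    {i ∈ Finset.range j | w.getD (i % p) 0 = 1}.card = (j * q + r) / p := by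
  induction j with
  | zero => simpa using hw.div_eq_zero.symm
  | succ j ih =>
    rw [Finset.card_filter, Finset.sum_range_succ, ← Finset.card_filter, ih]
    have hdecomp : ∀ s, (j + s) * q + r = (j % p + s) * q + r + p * (j / p * q) := fun s => by
      conv_lhs => rw [← Nat.mod_add_div j p]
      ring
    have h0 := hdecomp 0
    have h1 := hdecomp 1
    simp only [Nat.add_zero] at h0
    rw [h0, h1, Nat.add_mul_div_left _ _ hp, Nat.add_mul_div_left _ _ hp,
      hw.div_succ_eq (Nat.mod_lt j hp)]
    ring

theorem flatten_replicate_append {cur prev : List ℤ} {p' q' e R : ℕ} (μ : ℕ)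
    (hcur : IsMechanical cur p q r) (hp : 0 < p) (hlen : prev.length = p')
    (hcount : prev.count 1 = q') (hpre : prev.dropLast <+: cur) (he : e ≤ 1)
    (hdet : (q : ℤ) * p' - p * q' = 2 * e - 1) (hr : (r : ℤ) = q - e)
    (hR : (R : ℤ) = μ * q + q' - (1 - e)) :
    IsMechanical ((List.replicate μ cur).flatten ++ prev) (μ * p + p') (μ * q + q') R := by
  have hflen : (List.replicate μ cur).flatten.length = μ * p := by simp [hcur.1]
  have he' : (e : ℤ) = 0 ∨ (e : ℤ) = 1 := by omega
  refine ⟨by rw [List.length_append, hflen, hlen], fun j hj => ?_⟩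
  rcases hj.lt_or_eq with hj | rfl
  · have htake : ((List.replicate μ cur).flatten ++ prev).take j
        = (List.replicate (μ + 1) cur).flatten.take j := by
      rw [List.replicate_succ', List.flatten_append, List.flatten_singleton, List.take_append,
        List.take_append, hflen, List.take_eq_take_of_dropLast_prefix hpre (by omega)]
    have hp'p : p' - 1 ≤ p := by simpa [hlen, hcur.1] using hpre.length_le
    rw [htake, hcur.count_take_flatten_replicate hp (μ + 1) (by rw [Nat.succ_mul]; omega)]
    have hjP : (j : ℤ) < (μ * p + p' : ℕ) := by exact_mod_cast hj
    have key : ((j * q + r : ℕ) : ℤ) * (μ * p + p' : ℕ) - (j * (μ * q + q') + R : ℕ) * p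
        = (j + 1) * (2 * e - 1) - e * (μ * p + p' : ℕ) + (1 - e) * p := by
      push_cast [hr, hR]
      linear_combination (j + 1 : ℤ) * hdet
    push_cast at key hjP
    apply Nat.div_eq_div_of_mul_lt <;> zify <;> rcases he' with he' | he' <;> rw [he'] at key <;>
      linarith
  · have hRP : R < μ * p + p' := by
      have hrp : (r : ℤ) < p := by exact_mod_cast Nat.lt_of_div_eq_zero hp hcur.div_eq_zero
      have hqp' : (q' : ℤ) ≤ p' := by exact_mod_cast hcount ▸ hlen ▸ List.count_le_length
      zify
      rcases he' with he' | he' <;> rw [he'] at hR hr hdet <;> nlinarith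
    rw [List.take_of_length_le (by simp [hflen, hlen]), List.count_append, List.count_flatten,
      List.map_replicate, List.sum_replicate, smul_eq_mul, hcur.count_eq hp, hcount,
      Nat.mul_comm, Nat.mul_add_div (by omega), Nat.div_eq_of_lt hRP, Nat.add_zero]

end IsMechanical

theorem floor_le_card_filter_Ico_le_ceil {P : ℕ → Prop} [DecidablePred P] {p q r : ℕ}
    (hcount : ∀ j, {i ∈ Finset.range j | P i}.card = (j * q + r) / p) (n₁ m : ℕ) :
    ⌊(m : ℚ) * q / p⌋ ≤ ({i ∈ Finset.Ico n₁ (n₁ + m) | P i}.card : ℤ) ∧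
      ({i ∈ Finset.Ico n₁ (n₁ + m) | P i}.card : ℤ) ≤ ⌈(m : ℚ) * q / p⌉ := by
  set x : ℚ := ((n₁ * q + r : ℕ) : ℚ) / p
  set y : ℚ := (m : ℚ) * q / p
  have hsplit :=
    Finset.sum_range_add_sum_Ico (fun i => if P i then 1 else 0) (Nat.le_add_right n₁ m)
  simp only [← Finset.card_filter, hcount] at hsplit
  have hcard : ({i ∈ Finset.Ico n₁ (n₁ + m) | P i}.card : ℤ) = ⌊x + y⌋ - ⌊x⌋ := by
    have hxy : x + y = (((n₁ + m) * q + r : ℕ) : ℚ) / p := by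
      simp only [x, y]
      push_cast
      ring
    rw [hxy, Rat.floor_natCast_div_natCast, Rat.floor_natCast_div_natCast]
    omega
  rw [hcard]
  exact ⟨by linarith [Int.le_floor_add x y], by linarith [Int.floor_add_le_floor_add_ceil x y]⟩

theorem cfVal_nonneg (l : List ℕ) : 0 ≤ cfVal l := by
  induction l with
  | nil => exact le_rfl
  | cons a l ih => exact add_nonneg (Nat.cast_nonneg a) (inv_nonneg.mpr ih)

def smithStep (s : List ℤ × List ℤ) (μ : ℕ) : List ℤ × List ℤ :=
  (s.2, (List.replicate μ s.2).flatten ++ s.1)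

structure SmithPair (prev cur : List ℤ) (p' q' p q e : ℕ) : Prop where
  prev_length : prev.length = p'
  prev_count : prev.count 1 = q'
  dropLast_prefix : prev.dropLast <+: cur
  isMechanical : IsMechanical cur p q (q - e)
  pos : 0 < p
  one_le_count : 1 ≤ q
  le_one : e ≤ 1
  det : (q : ℤ) * p' - p * q' = 2 * e - 1

namespace SmithPair

variable {prev cur : List ℤ} {p' q' p q e : ℕ}

theorem coprime (h : SmithPair prev cur p' q' p q e) : p.Coprime q := by
  rw [← Nat.isCoprime_iff_coprime]
  obtain rfl | rfl : e = 0 ∨ e = 1 := by have := h.le_one; omega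
  · exact ⟨q', -p', by linear_combination -h.det⟩
  · exact ⟨-q', p', by linear_combination h.det⟩

theorem step (h : SmithPair prev cur p' q' p q e) {μ : ℕ} (hμ : 1 ≤ μ) :
    SmithPair cur (smithStep (prev, cur) μ).2 p q (μ * p + p') (μ * q + q') (1 - e) := by
  have hqμ : q ≤ μ * q := Nat.le_mul_of_pos_left q hμ
  have he := h.le_one
  have hq := h.one_le_count
  refine ⟨h.isMechanical.1, h.isMechanical.count_eq h.pos, ?_, ?_, ?_, by omega, by omega, ?_⟩
  · obtain ⟨ν, rfl⟩ := Nat.exists_eq_add_of_le' hμ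
    refine (List.dropLast_prefix cur).trans ?_
    simp [smithStep, List.replicate_succ, List.append_assoc]
  · exact h.isMechanical.flatten_replicate_append μ h.pos h.prev_length h.prev_count
      h.dropLast_prefix he h.det (by omega) (by omega)
  · exact Nat.add_pos_left (Nat.mul_pos hμ h.pos) p'
  · push_cast [Nat.cast_sub he]
    linear_combination -h.det

theorem foldl {l : List ℕ} (hl : ∀ a ∈ l, 1 ≤ a) (h : SmithPair prev cur p' q' p q e) :
    ∃ p₀' q₀' P Q E, SmithPair (l.foldl smithStep (prev, cur)).1 (l.foldl smithStep (prev, cur)).2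
        p₀' q₀' P Q E ∧
      (P : ℚ) * (q + q' * (cfVal l)⁻¹) = Q * (p + p' * (cfVal l)⁻¹) := by
  induction l generalizing prev cur p' q' p q e with
  | nil => exact ⟨p', q', p, q, e, h, by simp [cfVal, mul_comm]⟩
  | cons a l ih =>
    obtain ⟨p₀', q₀', P, Q, E, hS, hrel⟩ :=
      ih (fun b hb => hl b (List.mem_cons_of_mem a hb)) (h.step (hl a List.mem_cons_self))
    refine ⟨p₀', q₀', P, Q, E, hS, ?_⟩
    have hx : (a : ℚ) + (cfVal l)⁻¹ ≠ 0 := by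
      have := hl a List.mem_cons_self
      have := cfVal_nonneg l
      positivity
    rw [cfVal]
    apply mul_right_cancel₀ hx
    push_cast at hrel
    linear_combination hrel + ((P : ℚ) * q' - Q * p') * inv_mul_cancel₀ hx

end SmithPair

theorem exists_isMechanical_smithWord {μ₁ : ℕ} {rest : List ℕ} (hpos : ∀ a ∈ μ₁ :: rest, 1 ≤ a) :
    ∃ P Q r, IsMechanical (smithWord (μ₁ :: rest)) P Q r ∧ 0 < P ∧ 0 < Q ∧ P.Coprime Q ∧
      (P : ℚ) / Q = cfVal (μ₁ :: rest) := by
  have hμ₁ := hpos μ₁ List.mem_cons_self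
  -- `S₁ = S₀^(μ₁-1) S₋₁` for the virtual pair `(S₋₁, S₀) = (1, 0)`.
  have hS₁ : IsMechanical (List.replicate (μ₁ - 1) 0 ++ [1]) μ₁ 1 (1 - 1) := by
    have h := IsMechanical.flatten_replicate_append (cur := [0]) (prev := [1]) (p := 1) (q := 0)
      (r := 0) (p' := 1) (q' := 1) (e := 0) (R := 0) (μ₁ - 1) ⟨rfl, by decide⟩ one_pos rfl rfl
      List.nil_prefix zero_le_one (by norm_num) (by norm_num) (by push_cast; ring)
    rwa [List.flatten_replicate_singleton, Nat.mul_one, Nat.sub_add_cancel hμ₁, Nat.mul_zero,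
      Nat.zero_add] at h
  have h₀ : SmithPair [0] (List.replicate (μ₁ - 1) 0 ++ [1]) 1 0 μ₁ 1 1 :=
    ⟨rfl, rfl, List.nil_prefix, hS₁, hμ₁, le_rfl, le_rfl, by norm_num⟩
  obtain ⟨_, _, P, Q, E, hS, hrel⟩ := h₀.foldl fun a ha => hpos a (List.mem_cons_of_mem μ₁ ha)
  refine ⟨P, Q, Q - E, hS.isMechanical, hS.pos, hS.one_le_count, hS.coprime, ?_⟩
  have hQ : (Q : ℚ) ≠ 0 := by exact_mod_cast (Nat.one_le_iff_ne_zero.mp hS.one_le_count)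
  rw [div_eq_iff hQ, cfVal]
  push_cast at hrel
  linear_combination hrel

theorem smithWord_periodic_balanced_general (n k : ℕ) (hk : 1 ≤ k)
    (hcop : Nat.Coprime n k) (μ : List ℕ) (hne : μ ≠ [])
    (hpos : ∀ a ∈ μ, 1 ≤ a)
    (hval : cfVal μ = (n : ℚ) / k) :
    ∀ n₁ m : ℕ, 1 ≤ m →
      ⌊((m : ℚ) * k / n)⌋
          ≤ (((Finset.Ico n₁ (n₁ + m)).filter
              (fun j => (smithWord μ).getD (j % (smithWord μ).length) 0 = 1)).card : ℤ) ∧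
        (((Finset.Ico n₁ (n₁ + m)).filter
            (fun j => (smithWord μ).getD (j % (smithWord μ).length) 0 = 1)).card : ℤ)
          ≤ ⌈((m : ℚ) * k / n)⌉ := by
  intro n₁ m _
  obtain ⟨μ₁, rest, rfl⟩ := List.exists_cons_of_ne_nil hne
  obtain ⟨P, Q, r, hw, hP, hQ, hPQ, hPQval⟩ := exists_isMechanical_smithWord hpos
  obtain ⟨hPn, hQk⟩ : (P : ℤ) = n ∧ (Q : ℤ) = k := by
    refine Rat.div_int_inj (by omega) (by omega) hPQ hcop ?_
    push_cast
    exact hPQval.trans hval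
  obtain rfl : P = n := by omega
  obtain rfl : Q = k := by omega
  rw [hw.1]
  exact floor_le_card_filter_Ico_le_ceil (hw.card_filter_range hP) n₁ m

/-- For coprime `n > k ≥ 1` with continued fraction expansion `n/k = [μ₁, …, μ_t]`,
the infinite periodic word obtained by repeating the Smith word built from
`[μ₁ - 1, μ₂, …, μ_t]` is balanced with slope `k / n`: every factor of length `m ≥ 1`
contains between `⌊m k / n⌋` and `⌈m k / n⌉` ones. -/
theorem smithWord_periodic_balanced (n k : ℕ) (hk : 1 ≤ k) (hkn : k < n)
    (hcop : Nat.Coprime n k) (μ : List ℕ) (hne : μ ≠ [])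
    (hpos : ∀ a ∈ μ, 1 ≤ a) (hcanon : μ.length = 1 ∨ μ.getLast! ≠ 1)
    (hval : cfVal μ = (n : ℚ) / k) :
    ∀ n₁ m : ℕ, 1 ≤ m →
      ⌊((m : ℚ) * k / n)⌋
          ≤ (((Finset.Ico n₁ (n₁ + m)).filter
              (fun j => (smithWord μ).getD (j % (smithWord μ).length) 0 = 1)).card : ℤ) ∧
        (((Finset.Ico n₁ (n₁ + m)).filter
            (fun j => (smithWord μ).getD (j % (smithWord μ).length) 0 = 1)).card : ℤ)
          ≤ ⌈((m : ℚ) * k / n)⌉ :=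
  smithWord_periodic_balanced_general n k hk hcop μ hne hpos hval
end
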